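/- arXiv:2111.07120 — 6 statements merged into one kernel-verified Lean document; each statement's English description precedes it below -/
import Mathlib

section
/- Let α ∈ (1/2, 1), μ ∈ ℝ, and define G₁(t) = (1 + (t/2 + μ)²)/(1 + (t + μ)²). If t > 0 and G₁(t) ≥ α, then for every t' with 0 < t' < t we have G₁(t') > α. -/
theorem stmt_0 (α μ t t' : ℝ) (hα₁ : 1/2 < α) (hα₂ : α < 1) (ht : 0 < t)
    (hG : (1 + (t/2 + μ)^2) / (1 + (t + μ)^2) ≥ α)
    (ht'₀ : 0 < t') (ht' : t' < t) :
    (1 + (t'/2 + μ)^2) / (1 + (t' + μ)^2) > α := by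
  have h1 : (0:ℝ) < 1 + (t + μ)^2 := by positivity
  have h2 : (0:ℝ) < 1 + (t' + μ)^2 := by positivity
  rw [ge_iff_le, le_div_iff₀ h1] at hG
  rw [gt_iff_lt, lt_div_iff₀ h2]
  nlinarith [mul_pos (sub_pos.2 ht') (mul_pos (sub_pos.2 hα₂) (by positivity : (0:ℝ) < 1 + μ^2)),
    mul_nonneg ht'₀.le (sub_nonneg.2 hG), mul_pos ht'₀ (sub_pos.2 ht'),
    mul_pos (mul_pos ht'₀ (sub_pos.2 ht')) (sub_pos.2 hα₁)]
end

section
/- Let λ > 0, μ ∈ ℝ, and define F₁(t) = (arctan(λt + μ) − arctan(λt/2 + μ))/(arctan(λt/2 + μ) − arctan(λt/4 + μ)). If t > 0 and F₁(t) ≥ 3/2, then F₁(t/2) > 3/2. -/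
/-!
With `s = λt/8` and `φ = arctanBalance μ`, clearing the (positive)
denominators turns `F₁(t) ≥ 3/2` into `φ (2s) ≤ φ (4s)` and `F₁(t/2) > 3/2` into `φ s < φ (2s)`.
The derivative `φ'` has the sign of the concave quadratic `g x = 1 + μ² - 4μx - 8x²`, and
`g 0 > 0`, so on `[0, ∞)` the function `g` changes sign at most once, from `+` to `-`:
`φ` is unimodal there. If `φ (2s) ≤ φ (4s)`, then `g (2s) ≥ 0`, hence `g > 0`
on `[0, 2s)` and `φ` strictly increases on `[s, 2s]`.
-/

open Real Set

noncomputable def arctanBalance (μ x : ℝ) : ℝ :=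
  2 * arctan (2 * x + μ) - 3 * arctan (x + μ)

lemma continuous_arctanBalance (μ : ℝ) : Continuous (arctanBalance μ) := by
  unfold arctanBalance
  fun_prop

lemma hasDerivAt_arctanBalance (μ x : ℝ) :
    HasDerivAt (arctanBalance μ)
      ((1 + μ ^ 2 - 4 * μ * x - 8 * x ^ 2) / ((1 + (2 * x + μ) ^ 2) * (1 + (x + μ) ^ 2))) x := by
  have h2 := (((hasDerivAt_id x).const_mul 2).add_const μ).arctan.const_mul 2
  have h1 := ((hasDerivAt_id x).add_const μ).arctan.const_mul 3
  refine (h2.sub h1).congr_deriv ?_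
  simp only [id]
  rw [eq_div_iff (by positivity)]
  field_simp
  ring

lemma deriv_arctanBalance_pos_iff (μ x : ℝ) :
    0 < deriv (arctanBalance μ) x ↔ 0 < 1 + μ ^ 2 - 4 * μ * x - 8 * x ^ 2 := by
  rw [(hasDerivAt_arctanBalance μ x).deriv, div_pos_iff_of_pos_right (by positivity)]

lemma deriv_arctanBalance_neg_iff (μ x : ℝ) :
    deriv (arctanBalance μ) x < 0 ↔ 1 + μ ^ 2 - 4 * μ * x - 8 * x ^ 2 < 0 := by
  rw [(hasDerivAt_arctanBalance μ x).deriv, div_lt_iff₀ (by positivity), zero_mul]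

/-- Concavity with a positive value at `0`: `y g(x) = (y - x) g(0) + x g(y) + 8xy(y - x)`. -/
lemma quadratic_pos_of_nonneg_of_lt (μ : ℝ) {x y : ℝ} (hx : 0 ≤ x) (hxy : x < y)
    (hy : 0 ≤ 1 + μ ^ 2 - 4 * μ * y - 8 * y ^ 2) :
    0 < 1 + μ ^ 2 - 4 * μ * x - 8 * x ^ 2 := by
  have hyx : 0 < y - x := sub_pos.mpr hxy
  have hy0 : 0 < y := hx.trans_lt hxy
  have key : y * (1 + μ ^ 2 - 4 * μ * x - 8 * x ^ 2)
      = (y - x) * (1 + μ ^ 2) + x * (1 + μ ^ 2 - 4 * μ * y - 8 * y ^ 2) + 8 * x * y * (y - x) := by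
    ring
  have hpos : 0 < y * (1 + μ ^ 2 - 4 * μ * x - 8 * x ^ 2) := by
    rw [key]
    have : 0 < (y - x) * (1 + μ ^ 2) := by positivity
    have : 0 ≤ x * (1 + μ ^ 2 - 4 * μ * y - 8 * y ^ 2) := mul_nonneg hx hy
    have : 0 ≤ 8 * x * y * (y - x) := by positivity
    linarith
  exact pos_of_mul_pos_right hpos hy0.le

lemma arctanBalance_lt_of_le {μ a b c : ℝ} (ha : 0 ≤ a) (hab : a < b) (hbc : b < c)
    (h : arctanBalance μ b ≤ arctanBalance μ c) :
    arctanBalance μ a < arctanBalance μ b := by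
  have hb : 0 ≤ 1 + μ ^ 2 - 4 * μ * b - 8 * b ^ 2 := by
    by_contra! hneg
    have hanti : StrictAntiOn (arctanBalance μ) (Icc b c) := by
      refine strictAntiOn_of_deriv_neg (convex_Icc b c)
        (continuous_arctanBalance μ).continuousOn fun x hx => ?_
      rw [interior_Icc] at hx
      rw [deriv_arctanBalance_neg_iff]
      by_contra! hx'
      exact hneg.not_gt (quadratic_pos_of_nonneg_of_lt μ (ha.trans hab.le) hx.1 hx')
    exact (hanti ⟨le_rfl, hbc.le⟩ ⟨hbc.le, le_rfl⟩ hbc).not_ge h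
  have hmono : StrictMonoOn (arctanBalance μ) (Icc a b) := by
    refine strictMonoOn_of_deriv_pos (convex_Icc a b)
      (continuous_arctanBalance μ).continuousOn fun x hx => ?_
    rw [interior_Icc] at hx
    rw [deriv_arctanBalance_pos_iff]
    exact quadratic_pos_of_nonneg_of_lt μ (ha.trans hx.1.le) hx.2 hb
  exact hmono ⟨le_rfl, hab.le⟩ ⟨hab.le, le_rfl⟩ hab

theorem stmt_2 (lam μ t : ℝ) (hlam : 0 < lam) (ht : 0 < t)
    (hF : (Real.arctan (lam*t + μ) - Real.arctan (lam*t/2 + μ)) /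
          (Real.arctan (lam*t/2 + μ) - Real.arctan (lam*t/4 + μ)) ≥ 3/2) :
    (Real.arctan (lam*(t/2) + μ) - Real.arctan (lam*(t/2)/2 + μ)) /
      (Real.arctan (lam*(t/2)/2 + μ) - Real.arctan (lam*(t/2)/4 + μ)) > 3/2 := by
  set s := lam * t / 8 with hs_def
  have hs : 0 < s := by positivity
  rw [show lam * t / 2 = 4 * s by rw [hs_def]; ring, show lam * t / 4 = 2 * s by rw [hs_def]; ring,
    show lam * t = 8 * s by rw [hs_def]; ring] at hF
  rw [show lam * (t / 2) / 2 = 2 * s by rw [hs_def]; ring,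
    show lam * (t / 2) / 4 = s by rw [hs_def]; ring,
    show lam * (t / 2) = 4 * s by rw [hs_def]; ring]
  have h2s4s : arctanBalance μ (2 * s) ≤ arctanBalance μ (4 * s) := by
    rw [ge_iff_le, le_div_iff₀ (sub_pos.mpr (arctan_strictMono (by linarith)))] at hF
    simp only [arctanBalance, show 2 * (2 * s) = 4 * s by ring, show 2 * (4 * s) = 8 * s by ring]
    linarith
  have hs2s : arctanBalance μ s < arctanBalance μ (2 * s) :=
    arctanBalance_lt_of_le hs.le (by linarith) (by linarith) h2s4s
  simp only [arctanBalance, show 2 * (2 * s) = 4 * s by ring] at hs2s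
  rw [gt_iff_lt, lt_div_iff₀ (sub_pos.mpr (arctan_strictMono (by linarith)))]
  linarith
end

section
/- Let ν > 0 and define F₂(t) = (1/(t/2 + ν) − 1/(t + ν))/(1/(t/4 + ν) − 1/(t/2 + ν)). If t > 0 and F₂(t) ≥ 3/2, then F₂(t/2) > 3/2. -/
open Set

noncomputable def F₂ (ν t : ℝ) : ℝ :=
  (1/(t/2 + ν) - 1/(t + ν)) / (1/(t/4 + ν) - 1/(t/2 + ν))

-- Each difference is `s / ((s + ν) * (2 * s + ν))` with `s = t/2`, resp. `t/4`; the factor `t/2 + ν` cancels.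
lemma F₂_eq {ν t : ℝ} (hν : 0 ≤ ν) (ht : 0 < t) :
    F₂ ν t = 1/2 + 3 * ν / (2 * (t + ν)) := by
  have h₁ : t/4 + ν ≠ 0 := by positivity
  have h₂ : t/2 + ν ≠ 0 := by positivity
  have h₃ : t + ν ≠ 0 := by positivity
  have hD : 1/(t/4 + ν) - 1/(t/2 + ν) = t / (4 * (t/4 + ν) * (t/2 + ν)) := by
    field_simp
    ring
  have hN : 1/(t/2 + ν) - 1/(t + ν) = t / (2 * (t/2 + ν) * (t + ν)) := by
    field_simp
    ring
  rw [F₂, hD, hN]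
  field_simp
  ring

lemma F₂_strictAntiOn {ν : ℝ} (hν : 0 < ν) : StrictAntiOn (F₂ ν) (Ioi 0) := by
  intro a ha b hb hab
  rw [F₂_eq hν.le ha, F₂_eq hν.le hb]
  have ha_ν : 0 < a + ν := by linarith [mem_Ioi.mp ha]
  gcongr

theorem stmt_3 (ν t : ℝ) (hν : 0 < ν) (ht : 0 < t)
    (hF : (1/(t/2 + ν) - 1/(t + ν)) / (1/(t/4 + ν) - 1/(t/2 + ν)) ≥ 3/2) :
    (1/((t/2)/2 + ν) - 1/((t/2) + ν)) / (1/((t/2)/4 + ν) - 1/((t/2)/2 + ν)) > 3/2 :=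
  calc (3 : ℝ)/2 ≤ F₂ ν t := hF
    _ < F₂ ν (t/2) := F₂_strictAntiOn hν (half_pos ht) ht (half_lt_self ht)
end

section
/- Let u : ℝⁿ \ {x₀} → ℝ be given by u(x) = c₀/|x − x₀|^(n−2) with c₀ > 0 and n ≥ 3, and suppose also u(x) = c₀'/|x − x₀'|^(n−2) for all x in a nonempty open subset U of ℝⁿ \ ({x₀} ∪ {x₀'}), with c₀' > 0. Then x₀ = x₀' and c₀ = c₀'. -/
/-!
Away from the poles, `c₀ / ‖x - x₀‖ ^ m = c₀' / ‖x - x₀'‖ ^ m` says that the ratio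
`‖x - x₀'‖ / ‖x - x₀‖` has constant `m`-th power, hence is a constant `ρ`, so
`‖x - x₀'‖² - ρ² ‖x - x₀‖²` vanishes on `U`. Along a short segment through `p ∈ U` in the direction
`x₀' - x₀`, the second difference of this quadratic function at step `v` is `2 (1 - ρ²) ‖v‖²` and its
first difference is a multiple of `⟪x₀' - x₀, v⟫`; both vanish, which forces `x₀ = x₀'`, and then `c₀ = c₀'`.
-/

open Filter Topology

lemma IsOpen.exists_pos_add_smul_mem_and_sub_smul_mem {E : Type*} [AddCommGroup E]
    [TopologicalSpace E] [IsTopologicalAddGroup E] [Module ℝ E] [ContinuousSMul ℝ E]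
    {U : Set E} (hU : IsOpen U) {p : E} (hp : p ∈ U) (v : E) :
    ∃ t : ℝ, 0 < t ∧ p + t • v ∈ U ∧ p - t • v ∈ U := by
  have hplus : Tendsto (fun t : ℝ => p + t • v) (𝓝 0) (𝓝 p) := by
    have : Continuous fun t : ℝ => p + t • v := by fun_prop
    simpa using this.tendsto 0
  have hminus : Tendsto (fun t : ℝ => p - t • v) (𝓝 0) (𝓝 p) := by
    have : Continuous fun t : ℝ => p - t • v := by fun_prop
    simpa using this.tendsto 0
  have hnear : ∀ᶠ t in 𝓝 (0 : ℝ), p + t • v ∈ U ∧ p - t • v ∈ U :=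
    (hplus.eventually (hU.mem_nhds hp)).and (hminus.eventually (hU.mem_nhds hp))
  obtain ⟨t, ⟨htU, htU'⟩, ht⟩ :=
    ((hnear.filter_mono nhdsWithin_le_nhds).and (self_mem_nhdsWithin (s := Set.Ioi 0))).exists
  exact ⟨t, ht, htU, htU'⟩

lemma eq_of_forall_mem_norm_sub_sq_eq_mul {E : Type*} [NormedAddCommGroup E]
    [InnerProductSpace ℝ E] {U : Set E} (hU : IsOpen U) {p : E} (hp : p ∈ U)
    {a b : E} {k : ℝ} (h : ∀ x ∈ U, ‖x - a‖ ^ 2 = k * ‖x - b‖ ^ 2) : a = b := by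
  by_contra hab
  have hba : 0 < ‖b - a‖ := norm_pos_iff.mpr (sub_ne_zero.mpr (Ne.symm hab))
  obtain ⟨t, ht, hplus, hminus⟩ := hU.exists_pos_add_smul_mem_and_sub_smul_mem hp (b - a)
  set v := t • (b - a)
  have hv : 0 < ‖v‖ := by rw [norm_smul, Real.norm_of_nonneg ht.le]; positivity
  have expand_add (y : E) : ‖p + v - y‖ ^ 2 = ‖p - y‖ ^ 2 + 2 * inner ℝ (p - y) v + ‖v‖ ^ 2 := by
    rw [show p + v - y = p - y + v by abel, norm_add_sq_real]
  have expand_sub (y : E) : ‖p - v - y‖ ^ 2 = ‖p - y‖ ^ 2 - 2 * inner ℝ (p - y) v + ‖v‖ ^ 2 := by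
    rw [show p - v - y = p - y - v by abel, norm_sub_sq_real]
  have h₀ := h p hp
  have h_add := h _ hplus
  have h_sub := h _ hminus
  rw [expand_add, expand_add] at h_add
  rw [expand_sub, expand_sub] at h_sub
  have hk : k = 1 := by
    have : (1 - k) * ‖v‖ ^ 2 = 0 := by linear_combination (h_add + h_sub - 2 * h₀) / 2
    have := (mul_eq_zero.mp this).resolve_right (by positivity)
    linarith
  subst hk
  have hinner : inner ℝ (b - a) v = 0 := by
    rw [show b - a = (p - a) - (p - b) by abel, inner_sub_left]
    linear_combination (h_add - h_sub) / 4
  rw [real_inner_smul_right, real_inner_self_eq_norm_sq] at hinner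
  have : 0 < t * ‖b - a‖ ^ 2 := by positivity
  linarith

lemma exists_forall_mem_norm_sub_sq_eq_mul {E : Type*} [NormedAddCommGroup E] {U : Set E}
    (hne : U.Nonempty) {a b : E} (ha : a ∉ U) (hb : b ∉ U) {m : ℕ} (hm : m ≠ 0) {c c' : ℝ}
    (hc : c ≠ 0) (h : ∀ x ∈ U, c / ‖x - a‖ ^ m = c' / ‖x - b‖ ^ m) :
    ∃ k : ℝ, ∀ x ∈ U, ‖x - b‖ ^ 2 = k * ‖x - a‖ ^ 2 := by
  have dist_pos {x y : E} (hx : x ∈ U) (hy : y ∉ U) : 0 < ‖x - y‖ :=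
    norm_pos_iff.mpr (sub_ne_zero.mpr fun hxy => hy (hxy ▸ hx))
  have ratio_pow {x : E} (hx : x ∈ U) : (‖x - b‖ / ‖x - a‖) ^ m = c' / c := by
    have hxa := dist_pos hx ha
    have hxb := dist_pos hx hb
    have := h x hx
    rw [div_pow]
    field_simp at this ⊢
    linear_combination this
  obtain ⟨p, hp⟩ := hne
  refine ⟨(‖p - b‖ / ‖p - a‖) ^ 2, fun x hx => ?_⟩
  have hratio : ‖x - b‖ / ‖x - a‖ = ‖p - b‖ / ‖p - a‖ :=
    (pow_left_inj₀ (by positivity) (by positivity) hm).mp ((ratio_pow hx).trans (ratio_pow hp).symm)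
  rw [← hratio, div_pow, div_mul_cancel₀ _ (pow_pos (dist_pos hx ha) 2).ne']

theorem stmt_5_general (n : ℕ) (hn : 3 ≤ n) (c₀ c₀' : ℝ) (hc₀ : 0 < c₀)
    (x₀ x₀' : EuclideanSpace ℝ (Fin n)) (U : Set (EuclideanSpace ℝ (Fin n)))
    (hU : IsOpen U) (hne : U.Nonempty) (hx₀ : x₀ ∉ U) (hx₀' : x₀' ∉ U)
    (heq : ∀ x ∈ U, c₀ / ‖x - x₀‖ ^ (n - 2) = c₀' / ‖x - x₀'‖ ^ (n - 2)) :
    x₀ = x₀' ∧ c₀ = c₀' := by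
  obtain ⟨k, hk⟩ :=
    exists_forall_mem_norm_sub_sq_eq_mul hne hx₀ hx₀' (by omega) hc₀.ne' heq
  obtain ⟨p, hp⟩ := hne
  obtain rfl : x₀' = x₀ := eq_of_forall_mem_norm_sub_sq_eq_mul hU hp hk
  have hpx₀ : ‖p - x₀'‖ ^ (n - 2) ≠ 0 :=
    pow_ne_zero _ (norm_ne_zero_iff.mpr (sub_ne_zero.mpr fun h => hx₀ (h ▸ hp)))
  exact ⟨rfl, (div_left_inj' hpx₀).mp (heq p hp)⟩

theorem stmt_5 (n : ℕ) (hn : 3 ≤ n) (c₀ c₀' : ℝ) (hc₀ : 0 < c₀) (hc₀' : 0 < c₀')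
    (x₀ x₀' : EuclideanSpace ℝ (Fin n)) (U : Set (EuclideanSpace ℝ (Fin n)))
    (hU : IsOpen U) (hne : U.Nonempty) (hx₀ : x₀ ∉ U) (hx₀' : x₀' ∉ U)
    (heq : ∀ x ∈ U, c₀ / ‖x - x₀‖ ^ (n - 2) = c₀' / ‖x - x₀'‖ ^ (n - 2)) :
    x₀ = x₀' ∧ c₀ = c₀' :=
  stmt_5_general n hn c₀ c₀' hc₀ x₀ x₀' U hU hne hx₀ hx₀' heq
end

section
/- Let n ≥ 3, a > 0, θ ∈ (0, π), and set u(t) = (a² + t² − 2at cos θ)^{(2−n)/2} for t > 0. If (∫_{1/2}^{1} u(t)^{2/(n−2)} dt)/(∫_{1/4}^{1/2} u(t)^{2/(n−2)} dt) ≥ 3/2, then (∫_{1/4}^{1/2} u(t)^{2/(n−2)} dt)/(∫_{1/8}^{1/4} u(t)^{2/(n−2)} dt) > 3/2. -/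
/-!
The exponents cancel, so the integrand is `f t = 1 / (t² - 2mt + p)` with `m = a cos θ`,
`p = a²` and `m² < p`. Rescaling `[1/2, 1]` and `[1/8, 1/4]` onto `[1/4, 1/2]`, both ratios
compare `f u` with `f (2u)` and `f (u/2)` pointwise. If `p + m ≤ 1/2` then `2 f (2u) < (3/2) f u`
for `u > 1/4`, so the first ratio is below `3/2`; if `p + m > 1/2` then `(3/4) f (u/2) < f u`
on `(1/4, 1/2)`, so the second ratio exceeds `3/2`.
-/

open Set intervalIntegral

lemma rpow_rpow_eq_inv {x : ℝ} (hx : 0 ≤ x) {r : ℝ} (hr : r ≠ 2) :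
    (x ^ ((2 - r) / 2)) ^ (2 / (r - 2)) = x⁻¹ := by
  have hr' : r - 2 ≠ 0 := sub_ne_zero.2 hr
  rw [← Real.rpow_mul hx, show (2 - r) / 2 * (2 / (r - 2)) = -1 by field_simp; ring,
    Real.rpow_neg_one]

lemma integral_lt_integral_of_continuous_of_lt_on_Ioo {f g : ℝ → ℝ} {a b : ℝ} (hab : a < b)
    (hf : Continuous f) (hg : Continuous g) (hlt : ∀ x ∈ Ioo a b, f x < g x) :
    ∫ x in a..b, f x < ∫ x in a..b, g x := by
  rw [← sub_pos, ← integral_sub (hg.intervalIntegrable a b) (hf.intervalIntegrable a b)]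
  exact intervalIntegral_pos_of_pos_on ((hg.sub hf).intervalIntegrable a b)
    (fun x hx => sub_pos.2 (hlt x hx)) hab

noncomputable def invQuad (p m t : ℝ) : ℝ := (t ^ 2 - 2 * m * t + p)⁻¹

section
variable {p m : ℝ}

lemma quad_pos (hpm : m ^ 2 < p) (t : ℝ) : 0 < t ^ 2 - 2 * m * t + p := by
  nlinarith [sq_nonneg (t - m)]

lemma continuous_invQuad (hpm : m ^ 2 < p) : Continuous (invQuad p m) :=
  (by fun_prop : Continuous fun t : ℝ => t ^ 2 - 2 * m * t + p).inv₀
    fun t => (quad_pos hpm t).ne'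

lemma two_mul_invQuad_two_mul_lt (hpm : m ^ 2 < p) (hsmall : p + m ≤ 1 / 2) {u : ℝ}
    (hu : 1 / 4 < u) : 2 * invQuad p m (2 * u) < 3 / 2 * invQuad p m u := by
  have h1 := quad_pos hpm u
  have h2 := quad_pos hpm (2 * u)
  unfold invQuad
  rw [← div_eq_mul_inv, ← div_eq_mul_inv, div_lt_div_iff₀ h2 h1]
  -- the goal is `8u² - 4mu - p > 0`, which `p ≤ 1/2 - m` reduces to
  -- `(4u - 1)((4u + 1)/2 - m) > 0`
  nlinarith [mul_pos (by linarith : (0:ℝ) < 4 * u - 1)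
    (by nlinarith : (0:ℝ) < 4 * u + 1 - 2 * m)]

lemma three_quarters_mul_invQuad_half_lt (hpm : m ^ 2 < p) (hlarge : 1 / 2 < p + m) {u : ℝ}
    (hu : u ∈ Ioo (1 / 4 : ℝ) (1 / 2)) : 3 / 4 * invQuad p m (u / 2) < invQuad p m u := by
  obtain ⟨hu₁, hu₂⟩ := hu
  have h1 := quad_pos hpm u
  have h2 := quad_pos hpm (u / 2)
  unfold invQuad
  rw [← div_eq_mul_inv, ← one_div, div_lt_div_iff₀ h2 h1]
  -- the goal is `p + 2mu - 2u² > 0`: use `p > 1/2 - m` (giving `(1 - 2u)((1 + 2u)/2 - m)`)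
  -- if `m ≤ 3/4`, and `p > m²` (giving `(m - u)(m + 3u) + u²`) otherwise
  rcases le_or_gt m (3 / 4) with hm | hm
  · nlinarith [mul_pos (by linarith : (0:ℝ) < 1 - 2 * u)
      (by linarith : (0:ℝ) < 1 + 2 * u - 2 * m)]
  · nlinarith [mul_pos (by linarith : (0:ℝ) < m - u) (by linarith : (0:ℝ) < m + 3 * u)]

lemma integral_invQuad_lt_of_add_le (hpm : m ^ 2 < p) (hsmall : p + m ≤ 1 / 2) :
    ∫ t in (1 / 2 : ℝ)..1, invQuad p m t <
      3 / 2 * ∫ t in (1 / 4 : ℝ)..(1 / 2), invQuad p m t := by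
  have hf := continuous_invQuad hpm
  calc ∫ t in (1 / 2 : ℝ)..1, invQuad p m t
      = ∫ u in (1 / 4 : ℝ)..(1 / 2), 2 * invQuad p m (2 * u) := by
        rw [integral_const_mul, integral_comp_mul_left _ two_ne_zero]; norm_num [← mul_assoc]
    _ < ∫ u in (1 / 4 : ℝ)..(1 / 2), 3 / 2 * invQuad p m u :=
        integral_lt_integral_of_continuous_of_lt_on_Ioo (by norm_num) (by fun_prop)
          (by fun_prop) fun u hu => two_mul_invQuad_two_mul_lt hpm hsmall hu.1
    _ = 3 / 2 * ∫ t in (1 / 4 : ℝ)..(1 / 2), invQuad p m t := integral_const_mul _ _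

lemma integral_invQuad_gt_of_lt_add (hpm : m ^ 2 < p) (hlarge : 1 / 2 < p + m) :
    3 / 2 * ∫ t in (1 / 8 : ℝ)..(1 / 4), invQuad p m t <
      ∫ t in (1 / 4 : ℝ)..(1 / 2), invQuad p m t := by
  have hf := continuous_invQuad hpm
  calc 3 / 2 * ∫ t in (1 / 8 : ℝ)..(1 / 4), invQuad p m t
      = ∫ u in (1 / 4 : ℝ)..(1 / 2), 3 / 4 * invQuad p m (u / 2) := by
        rw [integral_const_mul, integral_comp_div _ two_ne_zero]; norm_num; ring
    _ < ∫ u in (1 / 4 : ℝ)..(1 / 2), invQuad p m u :=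
        integral_lt_integral_of_continuous_of_lt_on_Ioo (by norm_num) (by fun_prop) hf
          fun u hu => three_quarters_mul_invQuad_half_lt hpm hlarge hu

lemma integral_invQuad_pos (hpm : m ^ 2 < p) {a b : ℝ} (hab : a < b) :
    0 < ∫ t in a..b, invQuad p m t :=
  intervalIntegral_pos_of_pos ((continuous_invQuad hpm).intervalIntegrable a b)
    (fun t => inv_pos.2 (quad_pos hpm t)) hab

end

theorem stmt_10 (n : ℕ) (hn : 3 ≤ n) (a θ : ℝ) (ha : 0 < a)
    (hθ₁ : 0 < θ) (hθ₂ : θ < Real.pi)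
    (hF : (∫ t in (1/2 : ℝ)..(1 : ℝ),
            ((a^2 + t^2 - 2*a*t*Real.cos θ) ^ (((2:ℝ) - n)/2)) ^ ((2:ℝ) / ((n:ℝ) - 2))) /
          (∫ t in (1/4 : ℝ)..(1/2 : ℝ),
            ((a^2 + t^2 - 2*a*t*Real.cos θ) ^ (((2:ℝ) - n)/2)) ^ ((2:ℝ) / ((n:ℝ) - 2)))
          ≥ 3/2) :
    (∫ t in (1/4 : ℝ)..(1/2 : ℝ),
        ((a^2 + t^2 - 2*a*t*Real.cos θ) ^ (((2:ℝ) - n)/2)) ^ ((2:ℝ) / ((n:ℝ) - 2))) /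
      (∫ t in (1/8 : ℝ)..(1/4 : ℝ),
        ((a^2 + t^2 - 2*a*t*Real.cos θ) ^ (((2:ℝ) - n)/2)) ^ ((2:ℝ) / ((n:ℝ) - 2)))
      > 3/2 := by
  have hpm : (a * Real.cos θ) ^ 2 < a ^ 2 := by
    have hsin := Real.sin_pos_of_pos_of_lt_pi hθ₁ hθ₂
    nlinarith [Real.cos_sq_add_sin_sq θ, mul_pos (mul_pos ha hsin) (mul_pos ha hsin)]
  have hn2 : (n : ℝ) ≠ 2 := by
    have : (3 : ℝ) ≤ n := by exact_mod_cast hn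
    linarith
  have hu : ∀ t : ℝ,
      ((a^2 + t^2 - 2*a*t*Real.cos θ) ^ (((2:ℝ) - n)/2)) ^ ((2:ℝ) / ((n:ℝ) - 2)) =
        invQuad (a ^ 2) (a * Real.cos θ) t := fun t => by
    rw [invQuad, ← rpow_rpow_eq_inv (quad_pos hpm t).le hn2]
    congr 2
    ring
  simp only [hu] at hF ⊢
  rcases le_or_gt (a ^ 2 + a * Real.cos θ) (1 / 2) with hsmall | hlarge
  · have := integral_invQuad_lt_of_add_le hpm hsmall
    rw [ge_iff_le, le_div_iff₀ (integral_invQuad_pos hpm (by norm_num))] at hF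
    linarith
  · rw [gt_iff_lt, lt_div_iff₀ (integral_invQuad_pos hpm (by norm_num))]
    linarith [integral_invQuad_gt_of_lt_add hpm hlarge]
end

section
/- Let n ≥ 3, a > 0, and u(t) = (t + a)^{2−n} for t > 0. If (∫_{1/2}^{1} u(t)^{2/(n−2)} dt)/(∫_{1/4}^{1/2} u(t)^{2/(n−2)} dt) ≥ 3/2, then (∫_{1/4}^{1/2} u(t)^{2/(n−2)} dt)/(∫_{1/8}^{1/4} u(t)^{2/(n−2)} dt) > 3/2. -/
lemma stmt_11_aux (n : ℕ) (hn : 3 ≤ n) (a c d : ℝ) (ha : 0 < a) (hc : 0 < c) (hd : 0 < d) :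
    (∫ t in c..d, ((t + a) ^ ((2:ℝ) - n)) ^ ((2:ℝ) / ((n:ℝ) - 2))) = (c+a)⁻¹ - (d+a)⁻¹ := by
  have hn3 : (3:ℝ) ≤ (n:ℝ) := by exact_mod_cast hn
  have hn2 : (n:ℝ) - 2 ≠ 0 := by linarith
  have h1 : Set.EqOn (fun t : ℝ => ((t + a) ^ ((2:ℝ) - n)) ^ ((2:ℝ) / ((n:ℝ) - 2)))
      (fun t : ℝ => (t + a) ^ (-2 : ℝ)) (Set.uIcc c d) := by
    intro t ht
    have htm : min c d ≤ t := (Set.mem_uIcc.mp ht).elim (fun h => le_trans (min_le_left _ _) h.1)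
      (fun h => le_trans (min_le_right _ _) h.1)
    have htpos : 0 < t + a := by
      have : 0 < min c d := lt_min hc hd
      linarith
    simp only
    rw [← Real.rpow_mul htpos.le]
    congr 1
    field_simp
    ring
  rw [intervalIntegral.integral_congr h1,
    intervalIntegral.integral_comp_add_right (fun x => x ^ (-2:ℝ)) a]
  have h0 : (0:ℝ) ∉ Set.uIcc (c + a) (d + a) := by
    intro h
    have := (Set.mem_uIcc.mp h)
    rcases this with h | h <;> nlinarith [h.1]
  rw [integral_rpow (Or.inr ⟨by norm_num, h0⟩)]
  have hca : 0 < c + a := by linarith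
  have hda : 0 < d + a := by linarith
  rw [show (-2:ℝ) + 1 = -1 by norm_num, Real.rpow_neg_one, Real.rpow_neg_one]
  field_simp
  ring

theorem stmt_11 (n : ℕ) (hn : 3 ≤ n) (a : ℝ) (ha : 0 < a)
    (hF : (∫ t in (1/2 : ℝ)..(1 : ℝ), ((t + a) ^ ((2:ℝ) - n)) ^ ((2:ℝ) / ((n:ℝ) - 2))) /
          (∫ t in (1/4 : ℝ)..(1/2 : ℝ), ((t + a) ^ ((2:ℝ) - n)) ^ ((2:ℝ) / ((n:ℝ) - 2)))
          ≥ 3/2) :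
    (∫ t in (1/4 : ℝ)..(1/2 : ℝ), ((t + a) ^ ((2:ℝ) - n)) ^ ((2:ℝ) / ((n:ℝ) - 2))) /
      (∫ t in (1/8 : ℝ)..(1/4 : ℝ), ((t + a) ^ ((2:ℝ) - n)) ^ ((2:ℝ) / ((n:ℝ) - 2)))
      > 3/2 := by
  rw [stmt_11_aux n hn a (1/2) 1 ha (by norm_num) (by norm_num),
      stmt_11_aux n hn a (1/4) (1/2) ha (by norm_num) (by norm_num)] at hF
  rw [stmt_11_aux n hn a (1/4) (1/2) ha (by norm_num) (by norm_num),
      stmt_11_aux n hn a (1/8) (1/4) ha (by norm_num) (by norm_num)]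
  have h1 : (0:ℝ) < 1/8 + a := by linarith
  have h2 : (0:ℝ) < 1/4 + a := by linarith
  have h3 : (0:ℝ) < 1/2 + a := by linarith
  have h4 : (0:ℝ) < 1 + a := by linarith
  have e1 : (1/2 + a)⁻¹ - (1 + a)⁻¹ = (1/2) / ((1/2+a)*(1+a)) := by field_simp; ring
  have e2 : (1/4 + a)⁻¹ - (1/2 + a)⁻¹ = (1/4) / ((1/4+a)*(1/2+a)) := by field_simp; ring
  have e3 : (1/8 + a)⁻¹ - (1/4 + a)⁻¹ = (1/8) / ((1/8+a)*(1/4+a)) := by field_simp; ring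
  rw [e1, e2] at hF
  rw [e2, e3]
  have key1 : 1/2/((1/2+a)*(1+a)) / (1/4/((1/4+a)*(1/2+a))) = 2*(1/4+a)/(1+a) := by
    field_simp; ring
  have key2 : 1/4/((1/4+a)*(1/2+a)) / (1/8/((1/8+a)*(1/4+a))) = 2*(1/8+a)/(1/2+a) := by
    field_simp; ring
  rw [key1, ge_iff_le, le_div_iff₀ h4] at hF
  rw [key2, gt_iff_lt, lt_div_iff₀ h3]
  linarith
end
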